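/- Suppose (H1) and (H2) hold with β > 0. Let φ̄ ∈ Γ be an upper solution and φ̲ a lower solution of −u'(t) + f(u_t) = 0 satisfying (C1) 0 ≤ φ̲(t) ≤ φ̄(t) ≤ K for all t ∈ ℝ, and (C3) t ↦ e^{βt}(φ̄(t) − φ̲(t)) is non-decreasing on ℝ. Define x₁(t) = ∫_{−∞}^{t} e^{−β(t−s)} H(φ̄)(s) ds. Then x₁ is itself an upper solution of −u'(t) + f(u_t) = 0; indeed, x₁ is differentiable and −x₁'(t) + f((x₁)_t) ≤ 0 for all t ∈ ℝ. -/

import Mathlib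

open Real Filter MeasureTheory

/-- The segment `u_t ∈ C([−τ,0],ℝ)` of a function `u : ℝ → ℝ`, `u_t(s) = u(t+s)`. -/
def seg (τ : ℝ) (u : ℝ → ℝ) (t : ℝ) : Set.Icc (-τ) (0 : ℝ) → ℝ :=
  fun s => u (t + s.1)

/-!
Write `x₁(t) = e^{-βt} W(t)` with `W(t) = ∫_{-∞}^t e^{βs} H(φ̄)(s) ds`, so that
`x₁' = H(φ̄) - β x₁`. The function `e^{βt} φ̄(t)` is monotone, and almost everywhere its derivative
`e^{βt}(φ̄' + β φ̄)` dominates `W' = e^{βt} H(φ̄)` because `φ̄` is an upper solution. For a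
monotone function the integral of its a.e. derivative is at most its increment (no absolute
continuity is needed), so `e^{βt}(φ̄ - x₁)` is non-decreasing, and it is non-negative because `W`
vanishes at `-∞`. Hence (H2) applies to the segments of `φ̄` and `x₁`, giving
`f((x₁)_t) + β x₁(t) ≤ H(φ̄)(t) = x₁'(t) + β x₁(t)`.
-/

open Set

lemma continuous_seg {τ : ℝ} {u : ℝ → ℝ} (hu : Continuous u) (t : ℝ) :
    Continuous (seg τ u t) :=
  hu.comp (continuous_const.add continuous_subtype_val)

lemma continuous_comp_seg {τ : ℝ} {f : (Icc (-τ) (0 : ℝ) → ℝ) → ℝ}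
    (hf : Continuous fun φ : C(Icc (-τ) (0 : ℝ), ℝ) => f ⇑φ) {u : ℝ → ℝ} (hu : Continuous u) :
    Continuous fun t => f (seg τ u t) :=
  let U : C(ℝ × Icc (-τ) (0 : ℝ), ℝ) := ⟨fun p => u (p.1 + p.2.1), by fun_prop⟩
  hf.comp U.curry.continuous

lemma monotone_exp_mul_seg {τ β : ℝ} {u : ℝ → ℝ} (hu : Monotone fun t => exp (β * t) * u t)
    (t : ℝ) : Monotone fun r : Icc (-τ) (0 : ℝ) => exp (β * r) * seg τ u t r := by
  have h (r : ℝ) : exp (β * r) * u (t + r) = exp (-(β * t)) * (exp (β * (t + r)) * u (t + r)) := by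
    rw [← mul_assoc, ← exp_add]; ring_nf
  intro r₁ r₂ hr
  simp only [seg, h]
  exact mul_le_mul_of_nonneg_left (hu (add_le_add_right (Subtype.mono_coe _ hr) t)) (exp_pos _).le

lemma Monotone.exp_mul {β : ℝ} (hβ : 0 ≤ β) {φ : ℝ → ℝ} (hφ : Monotone φ) (hφ0 : ∀ t, 0 ≤ φ t) :
    Monotone fun t => exp (β * t) * φ t := fun _ _ hab =>
  mul_le_mul (exp_le_exp.2 (mul_le_mul_of_nonneg_left hab hβ)) (hφ hab) (hφ0 _) (exp_pos _).le

lemma Monotone.intervalIntegral_le_sub {m h : ℝ → ℝ} (hm : Monotone m) {a b : ℝ} (hab : a ≤ b)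
    (hh : IntervalIntegrable h volume a b) (hle : ∀ᵐ t, h t ≤ deriv m t) :
    ∫ t in a..b, h t ≤ m b - m a := by
  have hderiv := (hm.monotoneOn (uIcc a b)).intervalIntegral_deriv_mem_uIcc
  rw [uIcc_of_le (sub_nonneg.2 (hm hab))] at hderiv
  exact (intervalIntegral.integral_mono_ae hab hh
    (hm.monotoneOn _).intervalIntegrable_deriv hle).trans hderiv.2

lemma hasDerivAt_integral_Iic {k : ℝ → ℝ} (hk : Continuous k)
    (hint : ∀ t, IntegrableOn k (Iic t)) (t : ℝ) :
    HasDerivAt (fun u => ∫ s in Iic u, k s) (k t) t := by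
  have h : (fun u => ∫ s in Iic u, k s) = fun u => (∫ s in Iic 0, k s) + ∫ s in (0 : ℝ)..u, k s := by
    funext u
    rw [← intervalIntegral.integral_Iic_sub_Iic (hint 0) (hint u)]
    ring
  rw [h]
  exact (intervalIntegral.integral_hasDerivAt_right (hk.intervalIntegrable _ _)
    hk.aestronglyMeasurable.stronglyMeasurableAtFilter hk.continuousAt).const_add _

section ExpWeighted

variable {β C : ℝ} {g : ℝ → ℝ}

lemma integrableOn_exp_mul_Iic_of_ae_abs_le (hβ : 0 < β) (hg : AEStronglyMeasurable g)
    (hgC : ∀ᵐ s, |g s| ≤ C) (t : ℝ) :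
    IntegrableOn (fun s => exp (β * s) * g s) (Iic t) := by
  refine ((integrableOn_exp_mul_Iic hβ t).mul_const C).mono'
    ((by fun_prop : Continuous fun s => exp (β * s)).aestronglyMeasurable.mul hg).restrict ?_
  filter_upwards [ae_restrict_of_ae hgC] with s hs
  rw [norm_mul, norm_of_nonneg (exp_pos _).le, Real.norm_eq_abs]
  exact mul_le_mul_of_nonneg_left hs (exp_pos _).le

lemma abs_integral_exp_mul_Iic_le (hβ : 0 < β) (hgC : ∀ᵐ s, |g s| ≤ C) (t : ℝ) :
    |∫ s in Iic t, exp (β * s) * g s| ≤ C * exp (β * t) / β :=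
  calc |∫ s in Iic t, exp (β * s) * g s|
      ≤ ∫ s in Iic t, exp (β * s) * C := by
        rw [← Real.norm_eq_abs]
        refine norm_integral_le_of_norm_le ((integrableOn_exp_mul_Iic hβ t).mul_const C) ?_
        filter_upwards [ae_restrict_of_ae hgC] with s hs
        rw [norm_mul, norm_of_nonneg (exp_pos _).le, Real.norm_eq_abs]
        exact mul_le_mul_of_nonneg_left hs (exp_pos _).le
    _ = C * exp (β * t) / β := by rw [integral_mul_const, integral_exp_mul_Iic hβ]; ring

lemma tendsto_integral_exp_mul_Iic_atBot (hβ : 0 < β) (hgC : ∀ᵐ s, |g s| ≤ C) :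
    Tendsto (fun t => ∫ s in Iic t, exp (β * s) * g s) atBot (nhds 0) := by
  have hexp : Tendsto (fun t => C * exp (β * t) / β) atBot (nhds 0) := by
    simpa using ((tendsto_exp_atBot.comp (tendsto_id.const_mul_atBot hβ)).const_mul C).div_const β
  exact squeeze_zero_norm (fun t => abs_integral_exp_mul_Iic_le hβ hgC t) hexp

end ExpWeighted

noncomputable def dampedPrimitive (β : ℝ) (g : ℝ → ℝ) (t : ℝ) : ℝ :=
  ∫ s in Iic t, exp (-β * (t - s)) * g s

section DampedPrimitive

variable {β C : ℝ} {g : ℝ → ℝ}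

lemma dampedPrimitive_eq (β : ℝ) (g : ℝ → ℝ) (t : ℝ) :
    dampedPrimitive β g t = exp (-(β * t)) * ∫ s in Iic t, exp (β * s) * g s := by
  rw [dampedPrimitive, ← integral_const_mul]
  congr 1 with s
  rw [show -β * (t - s) = -(β * t) + β * s by ring, exp_add, mul_assoc]

lemma exp_mul_dampedPrimitive (β : ℝ) (g : ℝ → ℝ) (t : ℝ) :
    exp (β * t) * dampedPrimitive β g t = ∫ s in Iic t, exp (β * s) * g s := by
  rw [dampedPrimitive_eq, ← mul_assoc, ← exp_add, add_neg_cancel, exp_zero, one_mul]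

lemma dampedPrimitive_nonneg (hg : ∀ s, 0 ≤ g s) (t : ℝ) : 0 ≤ dampedPrimitive β g t :=
  setIntegral_nonneg measurableSet_Iic fun s _ => mul_nonneg (exp_pos _).le (hg s)

lemma hasDerivAt_dampedPrimitive (hβ : 0 < β) (hg : Continuous g) (hgC : ∀ᵐ s, |g s| ≤ C)
    (t : ℝ) : HasDerivAt (dampedPrimitive β g) (g t - β * dampedPrimitive β g t) t := by
  have hW := hasDerivAt_integral_Iic (by fun_prop)
    (integrableOn_exp_mul_Iic_of_ae_abs_le hβ hg.aestronglyMeasurable hgC) t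
  have hE : HasDerivAt (fun u => exp (-(β * u))) (exp (-(β * t)) * -(β * 1)) t :=
    ((hasDerivAt_id' t).const_mul β).neg.exp
  have hcancel : exp (-(β * t)) * exp (β * t) = 1 := by rw [← exp_add, neg_add_cancel, exp_zero]
  rw [funext (dampedPrimitive_eq β g)]
  refine (hE.mul hW).congr_deriv ?_
  linear_combination (g t) * hcancel

lemma monotone_exp_mul_sub_dampedPrimitive (hβ : 0 < β) {φ D : ℝ → ℝ}
    (hφ : Monotone fun t => exp (β * t) * φ t) (hD : ∀ᵐ t, HasDerivAt φ (D t) t)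
    (hgD : ∀ᵐ t, g t ≤ D t + β * φ t) (hg : Continuous g) (hgC : ∀ᵐ s, |g s| ≤ C) :
    Monotone fun t => exp (β * t) * (φ t - dampedPrimitive β g t) := by
  intro a b hab
  have hint := integrableOn_exp_mul_Iic_of_ae_abs_le hβ hg.aestronglyMeasurable hgC
  have hle : ∀ᵐ t, exp (β * t) * g t ≤ deriv (fun t => exp (β * t) * φ t) t := by
    filter_upwards [hD, hgD] with t hφt hgt
    have hm : HasDerivAt (fun t => exp (β * t) * φ t) (exp (β * t) * (D t + β * φ t)) t := by
      have hexp : HasDerivAt (fun u => exp (β * u)) (exp (β * t) * (β * 1)) t :=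
        ((hasDerivAt_id' t).const_mul β).exp
      exact (hexp.mul hφt).congr_deriv (by ring)
    rw [hm.deriv]
    exact mul_le_mul_of_nonneg_left hgt (exp_pos _).le
  have hmain := hφ.intervalIntegral_le_sub hab ((by fun_prop : Continuous _).intervalIntegrable a b) hle
  rw [← intervalIntegral.integral_Iic_sub_Iic (hint a) (hint b)] at hmain
  simp only [mul_sub, exp_mul_dampedPrimitive]
  linarith

lemma dampedPrimitive_le (hβ : 0 < β) {φ : ℝ → ℝ} (hφ : ∀ t, 0 ≤ φ t)
    (hmono : Monotone fun t => exp (β * t) * (φ t - dampedPrimitive β g t))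
    (hgC : ∀ᵐ s, |g s| ≤ C) (t : ℝ) :
    dampedPrimitive β g t ≤ φ t := by
  have hW := (tendsto_integral_exp_mul_Iic_atBot hβ hgC).neg
  rw [neg_zero] at hW
  have hpos : 0 ≤ exp (β * t) * (φ t - dampedPrimitive β g t) := by
    refine le_of_tendsto hW ?_
    filter_upwards [Iic_mem_atBot t] with v hv
    have := hmono hv
    dsimp only at this
    rw [mul_sub, exp_mul_dampedPrimitive] at this
    nlinarith [mul_nonneg (exp_pos (β * v)).le (hφ v)]
  exact sub_nonneg.1 ((mul_nonneg_iff_of_pos_left (exp_pos _)).1 hpos)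

end DampedPrimitive

theorem x1_is_upper_solution_general
    (τ : ℝ) (hτ : 0 < τ)
    (f : (Set.Icc (-τ) (0 : ℝ) → ℝ) → ℝ)
    (hf : Continuous fun φ : C(Set.Icc (-τ) (0 : ℝ), ℝ) => f ⇑φ)
    (K : ℝ)
    -- (H1)
    (hH1₀ : f (fun _ => (0 : ℝ)) = 0)
    (β : ℝ) (hβ : 0 < β)
    -- (H2)
    (hH2 : ∀ φ ψ : Set.Icc (-τ) (0 : ℝ) → ℝ, Continuous φ → Continuous ψ →
      (∀ s, 0 ≤ ψ s ∧ ψ s ≤ φ s ∧ φ s ≤ K) →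
      Monotone (fun s : Set.Icc (-τ) (0 : ℝ) => Real.exp (β * s.1) * (φ s - ψ s)) →
      0 ≤ f φ - f ψ +
        β * (φ ⟨0, Set.right_mem_Icc.mpr (neg_nonpos.mpr hτ.le)⟩ -
             ψ ⟨0, Set.right_mem_Icc.mpr (neg_nonpos.mpr hτ.le)⟩))
    -- φ̄ ∈ Γ
    (φb : ℝ → ℝ) (hφbc : Continuous φb) (hφbm : Monotone φb)
    (hφb₀ : Tendsto φb atBot (nhds 0)) (hφbK : Tendsto φb atTop (nhds K))
    -- φ̄ is an upper solution
    (hup : ∃ D : ℝ → ℝ, (∀ᵐ t ∂(volume : Measure ℝ), HasDerivAt φb (D t) t) ∧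
      (∃ M : ℝ, ∀ᵐ t ∂(volume : Measure ℝ), |D t| ≤ M) ∧
      (∀ᵐ t ∂(volume : Measure ℝ), f (seg τ φb t) ≤ D t))
    -- x₁
    (x₁ : ℝ → ℝ)
    (hx₁ : ∀ t : ℝ, x₁ t =
      ∫ s in Set.Iic t, Real.exp (-β * (t - s)) * (f (seg τ φb s) + β * φb s)) :
    ∀ t : ℝ, DifferentiableAt ℝ x₁ t ∧ f (seg τ x₁ t) ≤ deriv x₁ t := by
  obtain ⟨D, hD, ⟨M, hM⟩, hfD⟩ := hup
  have hφb_nonneg : ∀ t, 0 ≤ φb t := hφbm.le_of_tendsto hφb₀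
  have hφb_le : ∀ t, φb t ≤ K := hφbm.ge_of_tendsto hφbK
  set H : ℝ → ℝ := fun s => f (seg τ φb s) + β * φb s
  obtain rfl : x₁ = dampedPrimitive β H := funext hx₁
  have hH2_seg : ∀ u : ℝ → ℝ, Continuous u → (∀ t, 0 ≤ u t ∧ u t ≤ φb t) →
      Monotone (fun t => exp (β * t) * (φb t - u t)) → ∀ t, f (seg τ u t) + β * u t ≤ H t := by
    intro u hu hu_le hmono t
    have := hH2 (seg τ φb t) (seg τ u t) (continuous_seg hφbc t) (continuous_seg hu t)
      (fun r => ⟨(hu_le _).1, (hu_le _).2, hφb_le _⟩) (monotone_exp_mul_seg hmono t)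
    simp only [seg, add_zero] at this
    linarith
  have hφb_exp := hφbm.exp_mul hβ.le hφb_nonneg
  have hH_nonneg : ∀ t, 0 ≤ H t := by
    intro t
    have := hH2_seg 0 continuous_const (fun t => ⟨le_rfl, hφb_nonneg t⟩) (by simpa using hφb_exp) t
    rwa [show seg τ 0 t = fun _ => 0 from rfl, hH1₀, Pi.zero_apply, mul_zero, add_zero] at this
  have hH_le : ∀ᵐ t, H t ≤ D t + β * φb t := by
    filter_upwards [hfD] with t ht
    linarith
  have hH_bdd : ∀ᵐ t, |H t| ≤ M + β * K := by
    filter_upwards [hH_le, hM] with t hHt hDt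
    rw [abs_of_nonneg (hH_nonneg t)]
    nlinarith [le_abs_self (D t), hφb_le t]
  have hHc : Continuous H := (continuous_comp_seg hf hφbc).add (continuous_const.mul hφbc)
  have hderiv := hasDerivAt_dampedPrimitive hβ hHc hH_bdd
  have hmono := monotone_exp_mul_sub_dampedPrimitive hβ hφb_exp hD hH_le hHc hH_bdd
  have hle := dampedPrimitive_le hβ hφb_nonneg hmono hH_bdd
  intro t
  refine ⟨(hderiv t).differentiableAt, ?_⟩
  rw [(hderiv t).deriv]
  have := hH2_seg _ (continuous_iff_continuousAt.2 fun s => (hderiv s).continuousAt)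
    (fun s => ⟨dampedPrimitive_nonneg hH_nonneg s, hle s⟩) hmono t
  linarith

/-- Under (H1) and (H2) with `β > 0`, if `φ̄ ∈ Γ` is an upper solution of
`−u'(t) + f(u_t) = 0`, `φ̲` is a lower solution satisfying (C1) and (C3), and
`x₁(t) = ∫_{−∞}^t e^{−β(t−s)} H(φ̄)(s) ds`, then `x₁` is itself an upper
solution: `x₁` is differentiable and `−x₁'(t) + f((x₁)_t) ≤ 0` for all `t`. -/
theorem x1_is_upper_solution
    (τ : ℝ) (hτ : 0 < τ)
    (f : (Set.Icc (-τ) (0 : ℝ) → ℝ) → ℝ)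
    (hf : Continuous fun φ : C(Set.Icc (-τ) (0 : ℝ), ℝ) => f ⇑φ)
    (K : ℝ) (hK : 0 < K)
    -- (H1)
    (hH1₀ : f (fun _ => (0 : ℝ)) = 0) (hH1K : f (fun _ => K) = 0)
    (hH1ne : ∀ u : ℝ, 0 < u → u < K → f (fun _ => u) ≠ 0)
    (β : ℝ) (hβ : 0 < β)
    -- (H2)
    (hH2 : ∀ φ ψ : Set.Icc (-τ) (0 : ℝ) → ℝ, Continuous φ → Continuous ψ →
      (∀ s, 0 ≤ ψ s ∧ ψ s ≤ φ s ∧ φ s ≤ K) →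
      Monotone (fun s : Set.Icc (-τ) (0 : ℝ) => Real.exp (β * s.1) * (φ s - ψ s)) →
      0 ≤ f φ - f ψ +
        β * (φ ⟨0, Set.right_mem_Icc.mpr (neg_nonpos.mpr hτ.le)⟩ -
             ψ ⟨0, Set.right_mem_Icc.mpr (neg_nonpos.mpr hτ.le)⟩))
    -- φ̄ ∈ Γ
    (φb : ℝ → ℝ) (hφbc : Continuous φb) (hφbm : Monotone φb)
    (hφb₀ : Tendsto φb atBot (nhds 0)) (hφbK : Tendsto φb atTop (nhds K))
    (hφbΓ : ∀ s : ℝ, 0 < s →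
      Monotone fun t : ℝ => Real.exp (β * t) * (φb (t + s) - φb t))
    -- φ̄ is an upper solution
    (hup : ∃ D : ℝ → ℝ, (∀ᵐ t ∂(volume : Measure ℝ), HasDerivAt φb (D t) t) ∧
      (∃ M : ℝ, ∀ᵐ t ∂(volume : Measure ℝ), |D t| ≤ M) ∧
      (∀ᵐ t ∂(volume : Measure ℝ), f (seg τ φb t) ≤ D t))
    -- φ̲ is a lower solution satisfying (C1) and (C3)
    (φl : ℝ → ℝ) (hφlc : Continuous φl)
    (hlow : ∃ D : ℝ → ℝ, (∀ᵐ t ∂(volume : Measure ℝ), HasDerivAt φl (D t) t) ∧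
      (∃ M : ℝ, ∀ᵐ t ∂(volume : Measure ℝ), |D t| ≤ M) ∧
      (∀ᵐ t ∂(volume : Measure ℝ), D t ≤ f (seg τ φl t)))
    (hC1 : ∀ t : ℝ, 0 ≤ φl t ∧ φl t ≤ φb t ∧ φb t ≤ K)
    (hC3 : Monotone fun t : ℝ => Real.exp (β * t) * (φb t - φl t))
    -- x₁
    (x₁ : ℝ → ℝ)
    (hx₁ : ∀ t : ℝ, x₁ t =
      ∫ s in Set.Iic t, Real.exp (-β * (t - s)) * (f (seg τ φb s) + β * φb s)) :
    ∀ t : ℝ, DifferentiableAt ℝ x₁ t ∧ f (seg τ x₁ t) ≤ deriv x₁ t :=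
  x1_is_upper_solution_general τ hτ f hf K hH1₀ β hβ hH2 φb hφbc hφbm hφb₀ hφbK hup x₁ hx₁
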